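/- arXiv:2507.10835 — 7 statements merged into one kernel-verified Lean document; each statement's English description precedes it below -/
import Mathlib

section
/- Let H be a symmetric operator on a finite-dimensional real inner product space with smallest eigenvalue E₀ of multiplicity one having unit eigenvector ψ₀, and second smallest eigenvalue E₁ > E₀. Let φ be a unit vector whose decomposition φ = v₀ + w₀, with v₀ the orthogonal projection onto span(ψ₀) and w₀ ⊥ ψ₀, satisfies v₀ ≠ 0. Then for all t ≥ 0, letting ψ(t) = e^{−2tH}φ / ‖e^{−2tH}φ‖ and v = v₀/‖v₀‖, one has ‖v − ψ(t)‖ ≤ √2 (‖w₀‖/‖v₀‖) e^{−2(E₁−E₀)t}. -/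
/-! Split `φ = v₀ + w₀`. The flow `e^{-2tH}` multiplies `v₀` by `e^{-2tE₀}`. Being symmetric, it
keeps `w₀` orthogonal to `ψ₀`; and since by the Rayleigh bound every eigenvector with eigenvalue
below `E₁` is a multiple of `ψ₀`, the vector `w₀` only has components along eigenvectors with
eigenvalue at least `E₁`, so the flow shrinks it by at least `e^{-2tE₁}`. Finally, for a unit
vector `u`, `r ⊥ u` and `a > 0`, the normalization of `a u + r` lies within `√2 ‖r‖ / a` of `u`. -/

open scoped RealInnerProductSpace
open NormedSpace

theorem exp_apply_of_apply_eq_smul {𝕂 E : Type*} [RCLike 𝕂] [NormedAddCommGroup E]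
    [NormedSpace 𝕂 E] [CompleteSpace E] (A : E →L[𝕂] E) {c : 𝕂} {x : E} (h : A x = c • x) :
    exp A x = exp c • x := by
  have hpow (n : ℕ) : (A ^ n) x = c ^ n • x := by
    induction n with
    | zero => simp
    | succ n ih => rw [pow_succ', mul_apply_eq_comp, ih, map_smul, h, smul_smul, ← pow_succ]
  refine ((exp_series_hasSum_exp' (𝕂 := 𝕂) A).mapL (ContinuousLinearMap.apply 𝕂 E x)).unique ?_
  simpa [hpow, smul_smul] using (exp_series_hasSum_exp' (𝕂 := 𝕂) c).smul_const x

theorem inner_exp_apply_left {𝕜 E : Type*} [RCLike 𝕜] [NormedAddCommGroup E]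
    [InnerProductSpace 𝕜 E] [CompleteSpace E] {T : E →L[𝕜] E}
    (hT : (T : E →ₗ[𝕜] E).IsSymmetric) (x y : E) :
    inner 𝕜 (exp T x) y = inner 𝕜 x (exp T y) :=
  ContinuousLinearMap.isSelfAdjoint_iff_isSymmetric.mp
    (ContinuousLinearMap.isSelfAdjoint_iff_isSymmetric.mpr hT).exp x y

theorem exp_smul_apply_of_apply_eq_smul {E : Type*} [NormedAddCommGroup E]
    [NormedSpace ℝ E] [CompleteSpace E] (A : E →L[ℝ] E) (s : ℝ) {c : ℝ} {x : E}
    (h : A x = c • x) : exp (s • A) x = Real.exp (s * c) • x := by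
  rw [Real.exp_eq_exp_ℝ]
  exact exp_apply_of_apply_eq_smul _ (by rw [smul_apply, h, smul_smul])

theorem LinearMap.IsSymmetric.eq_inner_smul_of_eigenvalue_lt {F : Type*} [NormedAddCommGroup F]
    [InnerProductSpace ℝ F] {T : F →ₗ[ℝ] F} (hT : T.IsSymmetric) {ψ : F} (hψ : ‖ψ‖ = 1)
    {E₀ E₁ : ℝ} (heig : T ψ = E₀ • ψ) (hspec : ∀ w : F, ⟪ψ, w⟫ = 0 → E₁ * ‖w‖ ^ 2 ≤ ⟪w, T w⟫)
    {μ : ℝ} {x : F} (hx : T x = μ • x) (hμ : μ < E₁) : x = ⟪ψ, x⟫ • ψ := by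
  set c := ⟪ψ, x⟫
  have hc : c * E₀ = c * μ := by
    rw [mul_comm, ← real_inner_smul_left, ← heig, hT, hx, real_inner_smul_right, mul_comm]
  set u := x - c • ψ
  have hu : ⟪ψ, u⟫ = 0 := by
    rw [inner_sub_right, real_inner_smul_right, real_inner_self_eq_norm_sq, hψ]; ring
  have hTu : T u = μ • u := by
    rw [map_sub, map_smul, hx, heig, smul_smul, hc, smul_sub, smul_smul, mul_comm]
  have hnorm : E₁ * ‖u‖ ^ 2 ≤ μ * ‖u‖ ^ 2 := by
    simpa [hTu, real_inner_smul_right, real_inner_self_eq_norm_sq] using hspec u hu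
  have hu0 : ‖u‖ ^ 2 = 0 := by nlinarith [sq_nonneg ‖u‖]
  exact sub_eq_zero.mp (norm_eq_zero.mp (pow_eq_zero_iff two_ne_zero |>.mp hu0))

namespace LinearMap.IsSymmetric

variable {F : Type*} [NormedAddCommGroup F] [InnerProductSpace ℝ F] [FiniteDimensional ℝ F]
  {T : F →L[ℝ] F} (hT : (T : F →ₗ[ℝ] F).IsSymmetric)

theorem inner_eigenvectorBasis_exp_smul_apply (s : ℝ) (x : F) (i : Fin (Module.finrank ℝ F)) :
    ⟪hT.eigenvectorBasis rfl i, exp (s • T) x⟫ =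
      Real.exp (s * hT.eigenvalues rfl i) * ⟪hT.eigenvectorBasis rfl i, x⟫ := by
  rw [← inner_exp_apply_left (hT.smul (conj_trivial s)), exp_smul_apply_of_apply_eq_smul T s
    (hT.apply_eigenvectorBasis rfl i), real_inner_smul_left]
  rfl

theorem norm_exp_smul_apply_le {s E : ℝ} (hs : s ≤ 0) {x : F}
    (hx : ∀ i, ⟪hT.eigenvectorBasis rfl i, x⟫ ≠ 0 → E ≤ hT.eigenvalues rfl i) :
    ‖exp (s • T) x‖ ≤ Real.exp (s * E) * ‖x‖ := by
  have hsq : ‖exp (s • T) x‖ ^ 2 ≤ (Real.exp (s * E) * ‖x‖) ^ 2 := by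
    simp only [← (hT.eigenvectorBasis rfl).sum_sq_norm_inner_right, mul_pow, Finset.mul_sum,
      hT.inner_eigenvectorBasis_exp_smul_apply, norm_mul]
    refine Finset.sum_le_sum fun i _ => ?_
    by_cases hi : ⟪hT.eigenvectorBasis rfl i, x⟫ = 0
    · simp [hi]
    · gcongr
      rw [Real.norm_eq_abs, abs_of_pos (Real.exp_pos _)]
      exact Real.exp_le_exp.mpr (mul_le_mul_of_nonpos_left (hx i hi) hs)
  exact (pow_le_pow_iff_left₀ (norm_nonneg _) (by positivity) two_ne_zero).mp hsq

theorem le_eigenvalues_of_inner_ne_zero {ψ : F} (hψ : ‖ψ‖ = 1) {E₀ E₁ : ℝ} (heig : T ψ = E₀ • ψ)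
    (hspec : ∀ w : F, ⟪ψ, w⟫ = 0 → E₁ * ‖w‖ ^ 2 ≤ ⟪w, T w⟫) {w : F} (hw : ⟪ψ, w⟫ = 0)
    (i : Fin (Module.finrank ℝ F)) (hi : ⟪hT.eigenvectorBasis rfl i, w⟫ ≠ 0) :
    E₁ ≤ hT.eigenvalues rfl i := by
  by_contra! hlt
  apply hi
  rw [hT.eq_inner_smul_of_eigenvalue_lt hψ heig hspec (hT.apply_eigenvectorBasis rfl i) hlt,
    real_inner_smul_left, hw, mul_zero]

end LinearMap.IsSymmetric

theorem norm_sub_inv_norm_smul_add_le {F : Type*} [NormedAddCommGroup F] [InnerProductSpace ℝ F]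
    {u r : F} (hu : ‖u‖ = 1) (hr : ⟪u, r⟫ = 0) {a : ℝ} (ha : 0 < a) :
    ‖u - ‖a • u + r‖⁻¹ • (a • u + r)‖ ≤ √2 * (‖r‖ / a) := by
  set N := ‖a • u + r‖
  have hinner : ⟪u, a • u + r⟫ = a := by
    rw [inner_add_right, real_inner_smul_right, real_inner_self_eq_norm_sq, hu, hr]; ring
  have hN : N ^ 2 = a ^ 2 + ‖r‖ ^ 2 := by
    rw [norm_add_sq_real, real_inner_smul_left, hr, norm_smul, hu, Real.norm_of_nonneg ha.le]
    ring
  have haN : a ≤ N := abs_le_of_sq_le_sq' (by nlinarith [sq_nonneg ‖r‖]) (norm_nonneg _) |>.2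
  have hNpos : 0 < N := ha.trans_le haN
  have hdist : ‖u - N⁻¹ • (a • u + r)‖ ^ 2 = 2 - 2 * a / N := by
    rw [norm_sub_sq_real, real_inner_smul_right, hinner, norm_smul, norm_inv, norm_norm,
      inv_mul_cancel₀ hNpos.ne', hu]
    ring
  -- `(N - a) / N ≤ (N - a) * (N + a) / a ^ 2` because `a ^ 2 ≤ N * (N + a)`
  have hsq : ‖u - N⁻¹ • (a • u + r)‖ ^ 2 ≤ (√2 * (‖r‖ / a)) ^ 2 := by
    rw [hdist, mul_pow, Real.sq_sqrt zero_le_two, div_pow]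
    rw [show ‖r‖ ^ 2 = N ^ 2 - a ^ 2 by linarith]
    field_simp
    nlinarith [mul_nonneg (sub_nonneg.mpr haN) (mul_nonneg ha.le hNpos.le)]
  exact (pow_le_pow_iff_left₀ (norm_nonneg _) (by positivity) two_ne_zero).mp hsq

theorem gradient_flow_convergence_general
    {F : Type*} [NormedAddCommGroup F] [InnerProductSpace ℝ F] [FiniteDimensional ℝ F]
    (H : F →L[ℝ] F) (hH : ∀ x y : F, ⟪H x, y⟫ = ⟪x, H y⟫)
    (E₀ E₁ : ℝ)
    (ψ₀ : F) (hψ₀ : ‖ψ₀‖ = 1) (heig : H ψ₀ = E₀ • ψ₀)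
    (hspec : ∀ w : F, ⟪ψ₀, w⟫ = 0 → E₁ * ‖w‖ ^ 2 ≤ ⟪w, H w⟫)
    (φ : F)
    (v₀ w₀ : F) (hv₀ : v₀ = ⟪φ, ψ₀⟫ • ψ₀) (hw₀ : w₀ = φ - v₀) (hv₀ne : v₀ ≠ 0)
    (t : ℝ) (ht : 0 ≤ t) :
    ‖‖v₀‖⁻¹ • v₀ -
        ‖NormedSpace.exp ((-2 * t) • H) φ‖⁻¹ • NormedSpace.exp ((-2 * t) • H) φ‖ ≤
      Real.sqrt 2 * (‖w₀‖ / ‖v₀‖) * Real.exp (-2 * (E₁ - E₀) * t) := by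
  have hHsymm : (H : F →ₗ[ℝ] F).IsSymmetric := hH
  have hHv₀ : H v₀ = E₀ • v₀ := by rw [hv₀, map_smul, heig, smul_comm]
  have hw₀ψ₀ : ⟪ψ₀, w₀⟫ = 0 := by
    rw [hw₀, hv₀, inner_sub_right, real_inner_smul_right, real_inner_self_eq_norm_sq, hψ₀,
      real_inner_comm]
    ring
  have hv₀w₀ : ⟪v₀, exp ((-2 * t) • H) w₀⟫ = 0 := by
    rw [← inner_exp_apply_left (hHsymm.smul (conj_trivial _)),
      exp_smul_apply_of_apply_eq_smul H _ hHv₀, real_inner_smul_left, hv₀, real_inner_smul_left,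
      hw₀ψ₀, mul_zero, mul_zero]
  have hAw₀ : ‖exp ((-2 * t) • H) w₀‖ ≤ Real.exp (-2 * t * E₁) * ‖w₀‖ :=
    hHsymm.norm_exp_smul_apply_le (by linarith)
      (hHsymm.le_eigenvalues_of_inner_ne_zero hψ₀ heig hspec hw₀ψ₀)
  have hAφ : exp ((-2 * t) • H) φ =
      (Real.exp (-2 * t * E₀) * ‖v₀‖) • (‖v₀‖⁻¹ • v₀) + exp ((-2 * t) • H) w₀ := by
    rw [smul_smul, mul_assoc, mul_inv_cancel₀ (norm_ne_zero_iff.mpr hv₀ne), mul_one,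
      ← exp_smul_apply_of_apply_eq_smul H _ hHv₀, ← map_add, hw₀, add_sub_cancel]
  have hv₀pos : 0 < ‖v₀‖ := norm_pos_iff.mpr hv₀ne
  rw [hAφ]
  calc _ ≤ √2 * (‖exp ((-2 * t) • H) w₀‖ / (Real.exp (-2 * t * E₀) * ‖v₀‖)) :=
        norm_sub_inv_norm_smul_add_le (norm_smul_inv_norm hv₀ne)
          (by rw [real_inner_smul_left, hv₀w₀, mul_zero]) (by positivity)
    _ ≤ √2 * (Real.exp (-2 * t * E₁) * ‖w₀‖ / (Real.exp (-2 * t * E₀) * ‖v₀‖)) := by gcongr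
    _ = √2 * (‖w₀‖ / ‖v₀‖) * Real.exp (-2 * (E₁ - E₀) * t) := by
        rw [show -2 * (E₁ - E₀) * t = -2 * t * E₁ - -2 * t * E₀ by ring, Real.exp_sub]
        field_simp

/-- Convergence of the normalized imaginary-time evolution to the ground state:
if `E₀` is the simple smallest eigenvalue of `H` with unit eigenvector `ψ₀`, and the
Rayleigh quotient on the orthogonal complement of `ψ₀` is bounded below by the second
smallest eigenvalue `E₁ > E₀`, then the normalized flow starting at a unit vector `φ`
with nonzero projection `v₀` onto `span(ψ₀)` converges to `v₀/‖v₀‖` at exponential rate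
`e^{−2(E₁−E₀)t}` with prefactor `√2 ‖w₀‖/‖v₀‖`. -/
theorem gradient_flow_convergence
    {F : Type*} [NormedAddCommGroup F] [InnerProductSpace ℝ F] [FiniteDimensional ℝ F]
    (H : F →L[ℝ] F) (hH : ∀ x y : F, ⟪H x, y⟫ = ⟪x, H y⟫)
    (E₀ E₁ : ℝ) (hgap : E₀ < E₁)
    (ψ₀ : F) (hψ₀ : ‖ψ₀‖ = 1) (heig : H ψ₀ = E₀ • ψ₀)
    (hspec : ∀ w : F, ⟪ψ₀, w⟫ = 0 → E₁ * ‖w‖ ^ 2 ≤ ⟪w, H w⟫)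
    (φ : F) (hφ : ‖φ‖ = 1)
    (v₀ w₀ : F) (hv₀ : v₀ = ⟪φ, ψ₀⟫ • ψ₀) (hw₀ : w₀ = φ - v₀) (hv₀ne : v₀ ≠ 0)
    (t : ℝ) (ht : 0 ≤ t) :
    ‖‖v₀‖⁻¹ • v₀ -
        ‖NormedSpace.exp ((-2 * t) • H) φ‖⁻¹ • NormedSpace.exp ((-2 * t) • H) φ‖ ≤
      Real.sqrt 2 * (‖w₀‖ / ‖v₀‖) * Real.exp (-2 * (E₁ - E₀) * t) :=
  gradient_flow_convergence_general H hH E₀ E₁ ψ₀ hψ₀ heig hspec φ v₀ w₀ hv₀ hw₀ hv₀ne t ht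
end

section
/- Let H be a symmetric operator on a finite-dimensional real inner product space whose smallest eigenvalue E₀ is simple with unit eigenvector ψ₀, and let E₁ be the second smallest eigenvalue. Suppose v is a unit vector with Rayleigh quotient E(v) = ⟨v, Hv⟩ ≤ (E₀ + E₁)/2. Then ⟨v, ψ₀⟩² ≥ 1/2. -/
open scoped RealInnerProductSpace

/-!
Split `v = c ψ₀ + w` with `c = ⟪v, ψ₀⟫` and `w ⟂ ψ₀`. Since `ψ₀` is an eigenvector of the
symmetric `H`, the cross terms vanish and `⟪v, H v⟫ = E₀ c² + ⟪w, H w⟫ ≥ E₀ c² + E₁ (1 - c²)`.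
Comparing with the midpoint bound gives `(E₁ - E₀) / 2 ≤ (E₁ - E₀) c²`, and the gap lets us
divide by `E₁ - E₀`.
-/

section

variable {F : Type*} [NormedAddCommGroup F] [InnerProductSpace ℝ F] {ψ : F}

theorem inner_sub_inner_smul_eq_zero (hψ : ‖ψ‖ = 1) (v : F) : ⟪ψ, v - ⟪v, ψ⟫ • ψ⟫ = 0 := by
  rw [inner_sub_right, real_inner_smul_right, real_inner_self_eq_norm_sq, hψ,
    real_inner_comm]
  ring

theorem norm_sub_inner_smul_sq (hψ : ‖ψ‖ = 1) (v : F) :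
    ‖v - ⟪v, ψ⟫ • ψ‖ ^ 2 = ‖v‖ ^ 2 - ⟪v, ψ⟫ ^ 2 := by
  rw [norm_sub_sq_real, norm_smul, real_inner_smul_right, Real.norm_eq_abs, mul_pow, sq_abs,
    hψ]
  ring

theorem inner_map_self_eq_of_eigenvector {T : F →ₗ[ℝ] F} (hT : T.IsSymmetric) {E : ℝ}
    (hψ : ‖ψ‖ = 1) (heig : T ψ = E • ψ) (v : F) :
    ⟪v, T v⟫ = E * ⟪v, ψ⟫ ^ 2 + ⟪v - ⟪v, ψ⟫ • ψ, T (v - ⟪v, ψ⟫ • ψ)⟫ := by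
  set w := v - ⟪v, ψ⟫ • ψ
  have hwψ : ⟪ψ, w⟫ = 0 := inner_sub_inner_smul_eq_zero hψ v
  have hψTw : ⟪ψ, T w⟫ = 0 := by rw [← hT, heig, real_inner_smul_left, hwψ, mul_zero]
  have hv : v = ⟪v, ψ⟫ • ψ + w := by simp [w]
  conv_lhs => rw [hv]
  simp only [map_add, map_smul, inner_add_left, inner_add_right, real_inner_smul_left,
    real_inner_smul_right, hψTw, heig, real_inner_comm ψ w, hwψ, real_inner_self_eq_norm_sq, hψ]
  ring

theorem le_inner_map_self_of_spectral_gap {T : F →ₗ[ℝ] F} (hT : T.IsSymmetric) {E₀ E₁ : ℝ}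
    (hψ : ‖ψ‖ = 1) (heig : T ψ = E₀ • ψ)
    (hspec : ∀ w : F, ⟪ψ, w⟫ = 0 → E₁ * ‖w‖ ^ 2 ≤ ⟪w, T w⟫) (v : F) :
    E₀ * ⟪v, ψ⟫ ^ 2 + E₁ * (‖v‖ ^ 2 - ⟪v, ψ⟫ ^ 2) ≤ ⟪v, T v⟫ := by
  have hw := hspec _ (inner_sub_inner_smul_eq_zero hψ v)
  rw [norm_sub_inner_smul_sq hψ] at hw
  rw [inner_map_self_eq_of_eigenvector hT hψ heig]
  linarith

end

theorem overlap_below_midpoint_general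
    {F : Type*} [NormedAddCommGroup F] [InnerProductSpace ℝ F]
    (H : F →L[ℝ] F) (hH : ∀ x y : F, ⟪H x, y⟫ = ⟪x, H y⟫)
    (E₀ E₁ : ℝ) (hgap : E₀ < E₁)
    (ψ₀ : F) (hψ₀ : ‖ψ₀‖ = 1) (heig : H ψ₀ = E₀ • ψ₀)
    (hspec : ∀ w : F, ⟪ψ₀, w⟫ = 0 → E₁ * ‖w‖ ^ 2 ≤ ⟪w, H w⟫)
    (v : F) (hv : ‖v‖ = 1) (hEv : ⟪v, H v⟫ ≤ (E₀ + E₁) / 2) :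
    (1 : ℝ) / 2 ≤ ⟪v, ψ₀⟫ ^ 2 := by
  have hbound := le_inner_map_self_of_spectral_gap (T := (H : F →ₗ[ℝ] F)) hH hψ₀ heig hspec v
  rw [hv, one_pow, ContinuousLinearMap.coe_coe] at hbound
  have hscaled : (E₁ - E₀) * (1 / 2) ≤ (E₁ - E₀) * ⟪v, ψ₀⟫ ^ 2 := by linarith
  exact le_of_mul_le_mul_left hscaled (sub_pos.mpr hgap)

/-- If the energy of a unit vector `v` is at most the midpoint `(E₀+E₁)/2` between the simple
smallest eigenvalue `E₀` (with unit eigenvector `ψ₀`) and the second smallest eigenvalue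
`E₁`, then the overlap satisfies `⟪v, ψ₀⟫² ≥ 1/2`. -/
theorem overlap_below_midpoint
    {F : Type*} [NormedAddCommGroup F] [InnerProductSpace ℝ F] [FiniteDimensional ℝ F]
    (H : F →L[ℝ] F) (hH : ∀ x y : F, ⟪H x, y⟫ = ⟪x, H y⟫)
    (E₀ E₁ : ℝ) (hgap : E₀ < E₁)
    (ψ₀ : F) (hψ₀ : ‖ψ₀‖ = 1) (heig : H ψ₀ = E₀ • ψ₀)
    (hspec : ∀ w : F, ⟪ψ₀, w⟫ = 0 → E₁ * ‖w‖ ^ 2 ≤ ⟪w, H w⟫)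
    (v : F) (hv : ‖v‖ = 1) (hEv : ⟪v, H v⟫ ≤ (E₀ + E₁) / 2) :
    (1 : ℝ) / 2 ≤ ⟪v, ψ₀⟫ ^ 2 :=
  overlap_below_midpoint_general H hH E₀ E₁ hgap ψ₀ hψ₀ heig hspec v hv hEv
end

section
/- Let H be a symmetric operator on a finite-dimensional real inner product space whose smallest eigenvalue E₀ is simple with eigenvector ψ₀, and second smallest eigenvalue E₁ > E₀. Let ψ be a unit vector with E(ψ) = ⟨ψ, Hψ⟩ < (E₀ + E₁)/2. Then for every nonzero v in the tangent space T_ψ𝕊 (i.e., ⟨ψ, v⟩ = 0), the bilinear form a(v, v) = ⟨Hv, v⟩ − E(ψ)⟨v, v⟩ is strictly positive; hence a is an inner product on T_ψ𝕊. -/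
/-!
Split every vector along the ground state `ψ₀` as `x = ⟪ψ₀, x⟫ ψ₀ + x⊥`. The spectral gap gives
`⟪x, H x⟫ ≥ E₀ ‖x‖² + (E₁ - E₀) ‖x⊥‖²`. Applied to `ψ` with `β = ⟪ψ₀, ψ⟫`, it gives
`E(ψ) - E₀ ≥ (E₁ - E₀)(1 - β²)`, so `β² > 1/2`; and since `v ⊥ ψ`, Cauchy–Schwarz for `⟪ψ⊥, v⊥⟫`
gives `‖v⊥‖ ≥ |β| ‖v‖`. Hence
`⟪H v, v⟫ - E(ψ) ‖v‖² ≥ ((E₁ - E₀) β² - (E(ψ) - E₀)) ‖v‖²`, and the bracket is positive because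
`(E₁ - E₀) β² ≥ E₁ - E(ψ) > E(ψ) - E₀`.
-/

open scoped RealInnerProductSpace

section UnitVector

variable {F : Type*} [SeminormedAddCommGroup F] [InnerProductSpace ℝ F] {e : F}

theorem inner_sub_inner_smul_sub_inner_smul (he : ‖e‖ = 1) (x y : F) :
    ⟪x - ⟪e, x⟫ • e, y - ⟪e, y⟫ • e⟫ = ⟪x, y⟫ - ⟪e, x⟫ * ⟪e, y⟫ := by
  have hee : ⟪e, e⟫ = 1 := by rw [real_inner_self_eq_norm_sq, he, one_pow]
  simp only [inner_sub_left, inner_sub_right, real_inner_smul_left, real_inner_smul_right, hee,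
    real_inner_comm e]
  ring

theorem norm_sub_inner_smul_sq_s8 (he : ‖e‖ = 1) (x : F) :
    ‖x - ⟪e, x⟫ • e‖ ^ 2 = ‖x‖ ^ 2 - ⟪e, x⟫ ^ 2 := by
  rw [← real_inner_self_eq_norm_sq, inner_sub_inner_smul_sub_inner_smul he,
    real_inner_self_eq_norm_sq]
  ring

theorem inner_sq_mul_norm_sq_le_of_inner_eq_zero (he : ‖e‖ = 1) {ψ v : F} (hψv : ⟪ψ, v⟫ = 0) :
    ⟪e, ψ⟫ ^ 2 * ‖v‖ ^ 2 ≤ ‖ψ‖ ^ 2 * ‖v - ⟪e, v⟫ • e‖ ^ 2 := by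
  have hcs := real_inner_mul_inner_self_le (ψ - ⟪e, ψ⟫ • e) (v - ⟪e, v⟫ • e)
  rw [inner_sub_inner_smul_sub_inner_smul he, hψv, real_inner_self_eq_norm_sq,
    real_inner_self_eq_norm_sq, norm_sub_inner_smul_sq_s8 he, norm_sub_inner_smul_sq_s8 he v] at hcs
  rw [norm_sub_inner_smul_sq_s8 he]
  linarith

end UnitVector

theorem add_gap_mul_norm_sq_le_inner_apply_self {F : Type*} [SeminormedAddCommGroup F]
    [InnerProductSpace ℝ F] {H : F →L[ℝ] F} (hH : (H : F →ₗ[ℝ] F).IsSymmetric)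
    {E₀ E₁ : ℝ} {e : F} (he : ‖e‖ = 1) (heig : H e = E₀ • e)
    (hspec : ∀ w : F, ⟪e, w⟫ = 0 → E₁ * ‖w‖ ^ 2 ≤ ⟪w, H w⟫) (x : F) :
    E₀ * ‖x‖ ^ 2 + (E₁ - E₀) * ‖x - ⟪e, x⟫ • e‖ ^ 2 ≤ ⟪x, H x⟫ := by
  have hee : ⟪e, e⟫ = 1 := by rw [real_inner_self_eq_norm_sq, he, one_pow]
  have hHe : ⟪e, H x⟫ = E₀ * ⟪e, x⟫ := by
    rw [show ⟪e, H x⟫ = ⟪H e, x⟫ from (hH e x).symm, heig, real_inner_smul_left]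
  have hperp : ⟪e, x - ⟪e, x⟫ • e⟫ = 0 := by
    rw [inner_sub_right, real_inner_smul_right, hee, mul_one, sub_self]
  have hquad : ⟪x - ⟪e, x⟫ • e, H (x - ⟪e, x⟫ • e)⟫ = ⟪x, H x⟫ - E₀ * ⟪e, x⟫ ^ 2 := by
    simp only [map_sub, map_smul, heig, inner_sub_left, inner_sub_right, real_inner_smul_left,
      real_inner_smul_right, hHe, hee, real_inner_comm e x]
    ring
  have hperpGap := hspec _ hperp
  rw [hquad, norm_sub_inner_smul_sq_s8 he] at hperpGap
  rw [norm_sub_inner_smul_sq_s8 he]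
  linarith

theorem hessian_form_positive_on_tangent_general
    {F : Type*} [NormedAddCommGroup F] [InnerProductSpace ℝ F]
    (H : F →L[ℝ] F) (hH : ∀ x y : F, ⟪H x, y⟫ = ⟪x, H y⟫)
    (E₀ E₁ : ℝ) (hgap : E₀ < E₁)
    (ψ₀ : F) (hψ₀ : ‖ψ₀‖ = 1) (heig : H ψ₀ = E₀ • ψ₀)
    (hspec : ∀ w : F, ⟪ψ₀, w⟫ = 0 → E₁ * ‖w‖ ^ 2 ≤ ⟪w, H w⟫)
    (ψ : F) (hψ : ‖ψ‖ = 1)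
    (Eψ : ℝ) (hEψ : Eψ = ⟪ψ, H ψ⟫) (hmid : Eψ < (E₀ + E₁) / 2) :
    ∀ v : F, v ≠ 0 → ⟪ψ, v⟫ = 0 → 0 < ⟪H v, v⟫ - Eψ * ‖v‖ ^ 2 := by
  intro v hv hψv
  have hgapψ := add_gap_mul_norm_sq_le_inner_apply_self hH hψ₀ heig hspec ψ
  rw [norm_sub_inner_smul_sq_s8 hψ₀, hψ, ← hEψ] at hgapψ
  have hgapv := add_gap_mul_norm_sq_le_inner_apply_self hH hψ₀ heig hspec v
  have hcos := inner_sq_mul_norm_sq_le_of_inner_eq_zero hψ₀ hψv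
  rw [hψ, one_pow, one_mul] at hcos
  have hv2 : 0 < ‖v‖ ^ 2 := by positivity
  have hbracket : 0 < (E₁ - E₀) * ⟪ψ₀, ψ⟫ ^ 2 - (Eψ - E₀) := by linarith
  rw [real_inner_comm]
  nlinarith [mul_le_mul_of_nonneg_left hcos (sub_nonneg.2 hgap.le), mul_pos hbracket hv2]

/-- If the unit vector `ψ` has energy `E(ψ) < (E₀+E₁)/2`, then the bilinear form
`a(v, w) = ⟪Hv, w⟫ − E(ψ)⟪v, w⟫` is positive definite on the tangent space
`T_ψ𝕊 = {v : ⟪ψ, v⟫ = 0}`; hence it is an inner product there. -/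
theorem hessian_form_positive_on_tangent
    {F : Type*} [NormedAddCommGroup F] [InnerProductSpace ℝ F] [FiniteDimensional ℝ F]
    (H : F →L[ℝ] F) (hH : ∀ x y : F, ⟪H x, y⟫ = ⟪x, H y⟫)
    (E₀ E₁ : ℝ) (hgap : E₀ < E₁)
    (ψ₀ : F) (hψ₀ : ‖ψ₀‖ = 1) (heig : H ψ₀ = E₀ • ψ₀)
    (hspec : ∀ w : F, ⟪ψ₀, w⟫ = 0 → E₁ * ‖w‖ ^ 2 ≤ ⟪w, H w⟫)
    (ψ : F) (hψ : ‖ψ‖ = 1)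
    (Eψ : ℝ) (hEψ : Eψ = ⟪ψ, H ψ⟫) (hmid : Eψ < (E₀ + E₁) / 2) :
    ∀ v : F, v ≠ 0 → ⟪ψ, v⟫ = 0 → 0 < ⟪H v, v⟫ - Eψ * ‖v‖ ^ 2 :=
  hessian_form_positive_on_tangent_general H hH E₀ E₁ hgap ψ₀ hψ₀ heig hspec ψ hψ Eψ hEψ hmid
end

section
/- Let H be a symmetric operator on a finite-dimensional real inner product space whose smallest eigenvalue E₀ is simple with unit eigenvector ψ₀ and second smallest eigenvalue E₁. If u and w are unit vectors with ⟨u, Hu⟩ < (E₀+E₁)/2 and ⟨w, Hw⟩ ≤ (E₀+E₁)/2, then u and w cannot be orthogonal, i.e. ⟨u, w⟩ ≠ 0. -/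
open scoped RealInnerProductSpace

private lemma energy_lower_bound
    {F : Type*} [NormedAddCommGroup F] [InnerProductSpace ℝ F]
    (H : F →L[ℝ] F) (hH : ∀ x y : F, ⟪H x, y⟫ = ⟪x, H y⟫)
    (E₀ E₁ : ℝ)
    (ψ₀ : F) (hψ₀ : ‖ψ₀‖ = 1) (heig : H ψ₀ = E₀ • ψ₀)
    (hspec : ∀ w : F, ⟪ψ₀, w⟫ = 0 → E₁ * ‖w‖ ^ 2 ≤ ⟪w, H w⟫)
    (v : F) (hv : ‖v‖ = 1) :
    E₀ * ⟪ψ₀, v⟫ ^ 2 + E₁ * (1 - ⟪ψ₀, v⟫ ^ 2) ≤ ⟪v, H v⟫ := by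
  set a : ℝ := ⟪ψ₀, v⟫ with ha
  have hψψ : ⟪ψ₀, ψ₀⟫ = 1 := by
    rw [real_inner_self_eq_norm_sq, hψ₀]; norm_num
  have hvv : ⟪v, v⟫ = 1 := by
    rw [real_inner_self_eq_norm_sq, hv]; norm_num
  set v' : F := v - a • ψ₀ with hv'
  have horth : ⟪ψ₀, v'⟫ = 0 := by
    simp [hv', inner_sub_right, inner_smul_right, hψψ, hψ₀, ← ha]
  have hnorm : ‖v'‖ ^ 2 = 1 - a ^ 2 := by
    rw [← real_inner_self_eq_norm_sq]
    simp only [hv', inner_sub_left, inner_sub_right, real_inner_smul_left, real_inner_smul_right]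
    rw [hψψ, hvv, ← ha]
    rw [← real_inner_comm v ψ₀, ← ha]
    ring
  have hψHv : ⟪ψ₀, H v⟫ = E₀ * a := by
    rw [← hH, heig, inner_smul_left]
    simp [← ha]
  have hvHψ : ⟪v, H ψ₀⟫ = E₀ * a := by
    rw [heig, inner_smul_right, real_inner_comm, ← ha]
  have hE : ⟪v', H v'⟫ = ⟪v, H v⟫ - E₀ * a ^ 2 := by
    have : H v' = H v - a • H ψ₀ := by simp [hv']
    rw [this, hv', inner_sub_left, inner_sub_right, inner_sub_right,
      inner_smul_left, inner_smul_right, inner_smul_left, inner_smul_right,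
      hvHψ, hψHv]
    have : ⟪ψ₀, H ψ₀⟫ = E₀ := by
      rw [heig, inner_smul_right, hψψ]; ring
    rw [this]
    ring
  have := hspec v' horth
  rw [hnorm, hE] at this
  linarith

/-- Two unit vectors whose energies are below (resp. at most) the midpoint `(E₀+E₁)/2`
between the simple smallest eigenvalue `E₀` and the second smallest eigenvalue `E₁`
cannot be orthogonal. -/
theorem low_energy_vectors_not_orthogonal
    {F : Type*} [NormedAddCommGroup F] [InnerProductSpace ℝ F] [FiniteDimensional ℝ F]
    (H : F →L[ℝ] F) (hH : ∀ x y : F, ⟪H x, y⟫ = ⟪x, H y⟫)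
    (E₀ E₁ : ℝ) (hgap : E₀ < E₁)
    (ψ₀ : F) (hψ₀ : ‖ψ₀‖ = 1) (heig : H ψ₀ = E₀ • ψ₀)
    (hspec : ∀ w : F, ⟪ψ₀, w⟫ = 0 → E₁ * ‖w‖ ^ 2 ≤ ⟪w, H w⟫)
    (u w : F) (hu : ‖u‖ = 1) (hw : ‖w‖ = 1)
    (hEu : ⟪u, H u⟫ < (E₀ + E₁) / 2) (hEw : ⟪w, H w⟫ ≤ (E₀ + E₁) / 2) :
    ⟪u, w⟫ ≠ 0 := by
  intro horth
  have hbu := energy_lower_bound H hH E₀ E₁ ψ₀ hψ₀ heig hspec u hu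
  have hbw := energy_lower_bound H hH E₀ E₁ ψ₀ hψ₀ heig hspec w hw
  set a : ℝ := ⟪ψ₀, u⟫
  set b : ℝ := ⟪ψ₀, w⟫
  -- a² > 1/2 and b² ≥ 1/2
  have hau : a ^ 2 > 1 / 2 := by nlinarith
  have hbw2 : b ^ 2 ≥ 1 / 2 := by nlinarith
  -- Bessel: consider p = ψ₀ - a•u - b•w
  have hBessel : a ^ 2 + b ^ 2 ≤ 1 := by
    have hp : (0:ℝ) ≤ ‖ψ₀ - a • u - b • w‖ ^ 2 := sq_nonneg _
    rw [← real_inner_self_eq_norm_sq] at hp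
    have huu : ⟪u, u⟫ = 1 := by rw [real_inner_self_eq_norm_sq, hu]; norm_num
    have hww : ⟪w, w⟫ = 1 := by rw [real_inner_self_eq_norm_sq, hw]; norm_num
    have hψψ : ⟪ψ₀, ψ₀⟫ = 1 := by rw [real_inner_self_eq_norm_sq, hψ₀]; norm_num
    have h1 : ⟪u, ψ₀⟫ = a := (real_inner_comm ψ₀ u).symm ▸ rfl
    have h2 : ⟪w, ψ₀⟫ = b := (real_inner_comm ψ₀ w).symm ▸ rfl
    have h3 : ⟪w, u⟫ = 0 := by rw [real_inner_comm]; exact horth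
    simp only [inner_sub_left, inner_sub_right, inner_smul_left, inner_smul_right,
      huu, hww, hψψ, horth, h1, h2, h3, conj_trivial] at hp
    nlinarith [hp]
  linarith
end

section
/- Let H be a symmetric operator and ψ a unit vector such that E(ψ) = ⟨ψ, Hψ⟩ is not an eigenvalue of H (so H − E(ψ)I is invertible). Define d = ψ − (H − E(ψ)I)^{−1}ψ / ⟨(H − E(ψ)I)^{−1}ψ, ψ⟩. Then d lies in the tangent space, ⟨ψ, d⟩ = 0, and d solves the Newton equation ⟨(H − E(ψ)I)d, v⟩ = ⟨Hψ, v⟩ for all v with ⟨ψ, v⟩ = 0. -/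
open scoped RealInnerProductSpace

/-!
If `(H − E)u = ψ` and `c = ⟪u, ψ⟫`, then `(H − E)(ψ − c⁻¹u) = Hψ − (E + c⁻¹)ψ`, which differs
from `Hψ` by a multiple of `ψ` and hence pairs with every tangent vector `v ⊥ ψ` as `Hψ` does;
and `⟪ψ, ψ − c⁻¹u⟫ = ‖ψ‖² − c⁻¹c = 0` for a unit vector `ψ`.
-/

section Linear

variable {K M : Type*} [Field K] [AddCommGroup M] [Module K M]

theorem sub_smul_apply_sub_inv_smul_of_sub_smul_apply_eq {𝓕 : Type*} [FunLike 𝓕 M M]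
    [LinearMapClass 𝓕 K M M] (f : 𝓕) {E c : K} {ψ u : M} (hu : f u - E • u = ψ) :
    f (ψ - c⁻¹ • u) - E • (ψ - c⁻¹ • u) = f ψ - (E + c⁻¹) • ψ := by
  rw [map_sub, map_smul, eq_add_of_sub_eq hu]
  module

end Linear

section Inner

variable {F : Type*} [NormedAddCommGroup F] [InnerProductSpace ℝ F]

theorem inner_sub_inv_inner_smul_eq_zero {ψ u : F} (hψ : ‖ψ‖ = 1) (hc : ⟪u, ψ⟫ ≠ 0) :
    ⟪ψ, ψ - ⟪u, ψ⟫⁻¹ • u⟫ = 0 := by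
  rw [inner_sub_right, inner_smul_right, real_inner_self_eq_norm_sq, hψ, real_inner_comm u ψ,
    inv_mul_cancel₀ hc]
  norm_num

theorem inner_sub_smul_left_of_inner_eq_zero (x : F) (a : ℝ) {ψ v : F} (hv : ⟪ψ, v⟫ = 0) :
    ⟪x - a • ψ, v⟫ = ⟪x, v⟫ := by
  rw [inner_sub_left, inner_smul_left, hv, mul_zero, sub_zero]

end Inner

theorem newton_direction_representation_general
    {F : Type*} [NormedAddCommGroup F] [InnerProductSpace ℝ F]
    (H : F →L[ℝ] F)
    (ψ : F) (hψ : ‖ψ‖ = 1)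
    (Eψ : ℝ)
    (u : F) (hu : H u - Eψ • u = ψ)
    (c : ℝ) (hc : c = ⟪u, ψ⟫) (hcne : c ≠ 0)
    (d : F) (hd : d = ψ - c⁻¹ • u) :
    ⟪ψ, d⟫ = 0 ∧ ∀ v : F, ⟪ψ, v⟫ = 0 → ⟪H d - Eψ • d, v⟫ = ⟪H ψ, v⟫ := by
  subst hd
  refine ⟨hc ▸ inner_sub_inv_inner_smul_eq_zero hψ (hc ▸ hcne), fun v hv => ?_⟩
  rw [sub_smul_apply_sub_inv_smul_of_sub_smul_apply_eq H hu]
  exact inner_sub_smul_left_of_inner_eq_zero _ _ hv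

/-- Newton direction representation: if `E(ψ) = ⟪ψ, Hψ⟫` is not an eigenvalue of `H`, `u`
solves `(H − E(ψ)I)u = ψ`, and `c = ⟪u, ψ⟫ ≠ 0`, then `d = ψ − c⁻¹ u` lies in the tangent
space `T_ψ𝕊` and solves the Newton equation
`⟪(H − E(ψ)I)d, v⟫ = ⟪Hψ, v⟫` for all tangent vectors `v`. -/
theorem newton_direction_representation
    {F : Type*} [NormedAddCommGroup F] [InnerProductSpace ℝ F] [FiniteDimensional ℝ F]
    (H : F →L[ℝ] F) (hH : ∀ x y : F, ⟪H x, y⟫ = ⟪x, H y⟫)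
    (ψ : F) (hψ : ‖ψ‖ = 1)
    (Eψ : ℝ) (hEψ : Eψ = ⟪ψ, H ψ⟫)
    (hnoteig : ∀ x : F, x ≠ 0 → H x ≠ Eψ • x)
    (u : F) (hu : H u - Eψ • u = ψ)
    (c : ℝ) (hc : c = ⟪u, ψ⟫) (hcne : c ≠ 0)
    (d : F) (hd : d = ψ - c⁻¹ • u) :
    ⟪ψ, d⟫ = 0 ∧ ∀ v : F, ⟪ψ, v⟫ = 0 → ⟪H d - Eψ • d, v⟫ = ⟪H ψ, v⟫ :=
  newton_direction_representation_general H ψ hψ Eψ u hu c hc hcne d hd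
end

section
/- Let H be a symmetric operator on a finite-dimensional real inner product space and τ ∈ ℝ not an eigenvalue of H. Suppose E_J is an eigenvalue of H strictly closest to τ, i.e., |τ − E_J| < |τ − E| for every other eigenvalue E, with eigenspace V, and let φ₀ be a vector whose orthogonal projection v₀ onto V is nonzero. Define the inverse iteration ψ_{k+1} = (H − τI)^{−1}ψ_k / ‖(H − τI)^{−1}ψ_k‖ starting from ψ₀ = φ₀/‖φ₀‖, and let ζ = min over eigenvalues E ≠ E_J of |τ − E|, ρ = |E_J − τ|/ζ < 1, s = sign((E_J − τ)^{−1}). Then there is a constant C (depending on φ₀) such that ‖ψ_k − s^k v₀/‖v₀‖‖ ≤ C ρ^k for all sufficiently large k. -/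
open scoped RealInnerProductSpace

/-!
Write `φ₀ = v₀ + w` with `w` orthogonal to the `EJ`-eigenspace `V`. The map `T = (H - τ)⁻¹` is
symmetric and acts on `V` as `(EJ - τ)⁻¹`, so it preserves `Vᗮ`; an eigenvector of `T` with
eigenvalue `ν` is an eigenvector of `H` with eigenvalue `τ + ν⁻¹`, so on `Vᗮ` all eigenvalues of
`T` have modulus at most `ζ⁻¹`. Hence `Tᵏ φ₀ = (EJ - τ)⁻ᵏ v₀ + Tᵏ w` with `‖Tᵏ w‖ ≤ ζ⁻ᵏ ‖w‖`.
The iterates are `ψ k = Tᵏ φ₀ / ‖Tᵏ φ₀‖`, and `‖x / ‖x‖ - y / ‖y‖‖ ≤ 2 ‖x - y‖ / ‖y‖` applied to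
`y = (EJ - τ)⁻ᵏ v₀` gives the bound with `C = 2 ‖w‖ / ‖v₀‖`.
-/

namespace NormedSpace

variable {V W : Type*} [NormedAddCommGroup V] [NormedSpace ℝ V] [NormedAddCommGroup W]
  [NormedSpace ℝ W]

theorem normalize_smul_eq_real_sign_smul (r : ℝ) (x : V) :
    normalize (r • x) = Real.sign r • normalize x := by
  rcases lt_trichotomy r 0 with hr | rfl | hr
  · rw [normalize_smul_of_neg hr, Real.sign_of_neg hr, neg_one_smul]
  · simp
  · rw [normalize_smul_of_pos hr, Real.sign_of_pos hr, one_smul]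

theorem normalize_pow_smul (r : ℝ) (k : ℕ) (x : V) :
    normalize (r ^ k • x) = Real.sign r ^ k • normalize x := by
  induction k with
  | zero => simp
  | succ k ih =>
    rw [pow_succ', mul_smul, normalize_smul_eq_real_sign_smul, ih, pow_succ', mul_smul]

theorem normalize_map_normalize {𝓕 : Type*} [FunLike 𝓕 V W] [LinearMapClass 𝓕 ℝ V W] (T : 𝓕)
    (x : V) : normalize (T (normalize x)) = normalize (T x) := by
  rcases eq_or_ne x 0 with rfl | hx
  · simp
  · rw [show normalize x = ‖x‖⁻¹ • x from rfl, map_smul,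
      normalize_smul_of_pos (inv_pos.mpr (norm_pos_iff.mpr hx))]

theorem eq_normalize_iterate {𝓕 : Type*} [FunLike 𝓕 V V] [LinearMapClass 𝓕 ℝ V V] {T : 𝓕}
    {φ : V} {ψ : ℕ → V} (h0 : ψ 0 = normalize φ) (hstep : ∀ k, ψ (k + 1) = normalize (T (ψ k)))
    (k : ℕ) : ψ k = normalize (T^[k] φ) := by
  induction k with
  | zero => exact h0
  | succ k ih => rw [hstep, ih, normalize_map_normalize, Function.iterate_succ_apply']

theorem norm_normalize_sub_le {y : V} (hy : y ≠ 0) (x : V) :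
    ‖normalize x - normalize y‖ ≤ 2 * ‖x - y‖ / ‖y‖ := by
  have hy' : 0 < ‖y‖ := norm_pos_iff.mpr hy
  have key : ‖y‖ • (normalize x - normalize y) = (‖y‖ - ‖x‖) • normalize x + (x - y) := by
    rw [sub_smul, smul_sub, norm_smul_normalize, norm_smul_normalize]
    abel
  have hnx : ‖normalize x‖ ≤ 1 := by
    rcases eq_or_ne x 0 with rfl | hx
    · simp
    · exact (norm_normalize hx).le
  rw [le_div_iff₀ hy', mul_comm, ← Real.norm_of_nonneg hy'.le, ← norm_smul, key]
  calc ‖(‖y‖ - ‖x‖) • normalize x + (x - y)‖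
      ≤ |‖y‖ - ‖x‖| * ‖normalize x‖ + ‖x - y‖ := by
        simpa only [norm_smul, Real.norm_eq_abs] using
          norm_add_le ((‖y‖ - ‖x‖) • normalize x) (x - y)
    _ ≤ ‖x - y‖ * 1 + ‖x - y‖ := by
        gcongr
        rw [abs_sub_comm]
        exact abs_norm_sub_norm_le x y
    _ = 2 * ‖x - y‖ := by ring

end NormedSpace

section RightInverse

variable {K M : Type*} [Field K] [AddCommGroup M] [Module K M] {H T : M →ₗ[K] M} {τ : K}

theorem apply_eq_smul_of_sub_smul_rightInverse (hT : ∀ x, H (T x) - τ • T x = x) {ν : K}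
    {u : M} (hu : T u = ν • u) : H u = (τ + ν⁻¹) • u := by
  have hu' : ν • (H u - τ • u) = u := by
    conv_rhs => rw [← hT u]
    rw [hu, map_smul, smul_sub, smul_comm τ]
  rcases eq_or_ne ν 0 with rfl | hν
  · rw [← hu', zero_smul, map_zero, smul_zero]
  · rw [← eq_inv_smul_iff₀ hν, sub_eq_iff_eq_add'] at hu'
    rw [hu', add_smul]

theorem apply_eq_inv_sub_smul_of_sub_smul_rightInverse (hT : ∀ x, H (T x) - τ • T x = x)
    (hτ : ∀ x, H x = τ • x → x = 0) {μ : K} {u : M} (hu : H u = μ • u) :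
    T u = (μ - τ)⁻¹ • u := by
  rcases eq_or_ne μ τ with rfl | hμ
  · rw [hτ u hu, map_zero, smul_zero]
  · have hcoef : (μ - τ)⁻¹ * μ - τ * (μ - τ)⁻¹ = 1 := by field_simp [sub_ne_zero.mpr hμ]
    rw [← sub_eq_zero]
    apply hτ
    rw [← sub_eq_zero, map_sub, map_smul, hu, smul_sub, sub_sub_sub_comm, hT, smul_smul,
      smul_smul, ← sub_smul, hcoef, one_smul, sub_self]

end RightInverse

section Symmetric

variable {F : Type*} [NormedAddCommGroup F] [InnerProductSpace ℝ F]

theorem LinearMap.IsSymmetric.of_sub_smul_rightInverse {H T : F →ₗ[ℝ] F} {τ : ℝ}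
    (hH : H.IsSymmetric) (hT : ∀ x, H (T x) - τ • T x = x) : T.IsSymmetric := by
  intro x y
  conv_lhs => rw [← hT y]
  conv_rhs => rw [← hT x]
  rw [inner_sub_right, inner_sub_left, hH, real_inner_smul_left, real_inner_smul_right]

theorem LinearMap.IsSymmetric.norm_apply_le_of_inner_eigenvector_eq_zero [FiniteDimensional ℝ F]
    {A : F →ₗ[ℝ] F} (hA : A.IsSymmetric) {c : ℝ} (hc : 0 ≤ c) {x : F}
    (hx : ∀ (μ : ℝ) (u : F), A u = μ • u → c < |μ| → ⟪u, x⟫ = 0) : ‖A x‖ ≤ c * ‖x‖ := by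
  set b := hA.eigenvectorBasis rfl
  set μ := hA.eigenvalues rfl
  have hcoord (i) : ⟪b i, A x⟫ ^ 2 ≤ c ^ 2 * ⟪b i, x⟫ ^ 2 := by
    have hb : A (b i) = μ i • b i := hA.apply_eigenvectorBasis rfl i
    rw [← hA, hb, real_inner_smul_left, mul_pow]
    by_cases hμ : c < |μ i|
    · rw [hx _ _ hb hμ]; simp
    · exact mul_le_mul_of_nonneg_right
        (sq_le_sq.mpr (by rwa [abs_of_nonneg hc, ← not_lt])) (sq_nonneg _)
  rw [← sq_le_sq₀ (norm_nonneg _) (by positivity), mul_pow, ← b.sum_sq_inner_right,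
    ← b.sum_sq_inner_right, Finset.mul_sum]
  exact Finset.sum_le_sum fun i _ => hcoord i

end Symmetric

section Resolvent

variable {F : Type*} [NormedAddCommGroup F] [InnerProductSpace ℝ F] {H T : F →ₗ[ℝ] F}
  {τ EJ ζ : ℝ}

theorem inner_resolvent_apply_eq_zero (hH : H.IsSymmetric)
    (hT : ∀ x, H (T x) - τ • T x = x) (hτ : ∀ x, H x = τ • x → x = 0) {x : F}
    (hx : ∀ u, H u = EJ • u → ⟪x, u⟫ = 0) (u : F) (hu : H u = EJ • u) : ⟪T x, u⟫ = 0 := by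
  rw [hH.of_sub_smul_rightInverse hT, apply_eq_inv_sub_smul_of_sub_smul_rightInverse hT hτ hu,
    real_inner_smul_right, hx u hu, mul_zero]

variable [FiniteDimensional ℝ F]

theorem norm_resolvent_apply_le_inv_gap (hH : H.IsSymmetric)
    (hT : ∀ x, H (T x) - τ • T x = x) (hζ : 0 < ζ)
    (hsep : ∀ (μ : ℝ) (x : F), x ≠ 0 → H x = μ • x → μ ≠ EJ → ζ ≤ |τ - μ|) {x : F}
    (hx : ∀ u, H u = EJ • u → ⟪x, u⟫ = 0) : ‖T x‖ ≤ ζ⁻¹ * ‖x‖ := by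
  refine (hH.of_sub_smul_rightInverse hT).norm_apply_le_of_inner_eigenvector_eq_zero
    (inv_nonneg.mpr hζ.le) fun ν u hu hν => ?_
  have hHu := apply_eq_smul_of_sub_smul_rightInverse hT hu
  rcases eq_or_ne u 0 with rfl | hu0
  · exact inner_zero_left _
  by_cases hEJ : τ + ν⁻¹ = EJ
  · rw [real_inner_comm]
    exact hx u (hEJ ▸ hHu)
  · have hgap := hsep _ u hu0 hHu hEJ
    rw [sub_add_cancel_left, abs_neg, abs_inv] at hgap
    exact absurd hgap (not_le.mpr (inv_lt_of_inv_lt₀ hζ hν))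

theorem norm_resolvent_iterate_le_inv_gap_pow (hH : H.IsSymmetric)
    (hT : ∀ x, H (T x) - τ • T x = x) (hτ : ∀ x, H x = τ • x → x = 0) (hζ : 0 < ζ)
    (hsep : ∀ (μ : ℝ) (x : F), x ≠ 0 → H x = μ • x → μ ≠ EJ → ζ ≤ |τ - μ|) {x : F}
    (hx : ∀ u, H u = EJ • u → ⟪x, u⟫ = 0) (k : ℕ) : ‖T^[k] x‖ ≤ ζ⁻¹ ^ k * ‖x‖ := by
  induction k generalizing x with
  | zero => simp
  | succ k ih =>
    rw [Function.iterate_succ_apply, pow_succ, mul_assoc]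
    exact (ih (inner_resolvent_apply_eq_zero hH hT hτ hx)).trans
      (by gcongr; exact norm_resolvent_apply_le_inv_gap hH hT hζ hsep hx)

end Resolvent

/-- Convergence of shifted inverse iteration: if `τ` is not an eigenvalue of the symmetric
operator `H`, `E_J` is the strictly closest eigenvalue (distance `|E_J − τ| < ζ` where `ζ`
lower-bounds `|τ − E|` for every other eigenvalue `E`), `v₀ ≠ 0` is the orthogonal
projection of the initial vector `φ₀` onto the `E_J`-eigenspace, and `T = (H − τI)⁻¹`,
then the iterates `ψ_{k+1} = Tψ_k/‖Tψ_k‖` satisfy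
`‖ψ_k − s^k v₀/‖v₀‖‖ ≤ C ρ^k` for large `k`, with `ρ = |E_J − τ|/ζ` and
`s = sign(E_J − τ)`. -/
theorem inverse_iteration_convergence
    {F : Type*} [NormedAddCommGroup F] [InnerProductSpace ℝ F] [FiniteDimensional ℝ F]
    (H : F →L[ℝ] F) (hH : ∀ x y : F, ⟪H x, y⟫ = ⟪x, H y⟫)
    (τ EJ ζ : ℝ)
    (hτ : ∀ (μ : ℝ) (x : F), x ≠ 0 → H x = μ • x → μ ≠ τ)
    (hclose : |EJ - τ| < ζ)
    (hsep : ∀ (μ : ℝ) (x : F), x ≠ 0 → H x = μ • x → μ ≠ EJ → ζ ≤ |τ - μ|)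
    (T : F →L[ℝ] F) (hT : ∀ x : F, H (T x) - τ • T x = x)
    (φ₀ v₀ : F) (hv₀eig : H v₀ = EJ • v₀) (hv₀ne : v₀ ≠ 0)
    (horth : ∀ u : F, H u = EJ • u → ⟪φ₀ - v₀, u⟫ = 0)
    (ψ : ℕ → F) (hψ0 : ψ 0 = ‖φ₀‖⁻¹ • φ₀)
    (hstep : ∀ k : ℕ, ψ (k + 1) = ‖T (ψ k)‖⁻¹ • T (ψ k)) :
    ∃ (C : ℝ) (N : ℕ), ∀ k ≥ N,
      ‖ψ k - (Real.sign (EJ - τ)) ^ k • (‖v₀‖⁻¹ • v₀)‖ ≤ C * (|EJ - τ| / ζ) ^ k := by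
  have hζ : 0 < ζ := (abs_nonneg _).trans_lt hclose
  have hτ' (x : F) (hx : H x = τ • x) : x = 0 := by_contra fun h => hτ τ x h hx rfl
  have hEJτ : EJ - τ ≠ 0 := sub_ne_zero.mpr (hτ EJ v₀ hv₀ne hv₀eig)
  have hTv₀ : T v₀ = (EJ - τ)⁻¹ • v₀ :=
    apply_eq_inv_sub_smul_of_sub_smul_rightInverse (H := (H : F →ₗ[ℝ] F)) hT hτ' hv₀eig
  have hTv₀_iter (k : ℕ) : T^[k] v₀ = (EJ - τ)⁻¹ ^ k • v₀ := by
    induction k with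
    | zero => simp
    | succ k ih => rw [Function.iterate_succ_apply', ih, map_smul, hTv₀, smul_smul, ← pow_succ]
  refine ⟨2 * ‖φ₀ - v₀‖ / ‖v₀‖, 0, fun k _ => ?_⟩
  rw [NormedSpace.eq_normalize_iterate hψ0 hstep k, ← Real.sign_inv,
    show ‖v₀‖⁻¹ • v₀ = NormedSpace.normalize v₀ from rfl, ← NormedSpace.normalize_pow_smul]
  calc _ ≤ 2 * ‖T^[k] φ₀ - (EJ - τ)⁻¹ ^ k • v₀‖ / ‖(EJ - τ)⁻¹ ^ k • v₀‖ :=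
        NormedSpace.norm_normalize_sub_le (by simp [hEJτ, hv₀ne]) _
    _ ≤ 2 * (ζ⁻¹ ^ k * ‖φ₀ - v₀‖) / ‖(EJ - τ)⁻¹ ^ k • v₀‖ := by
        rw [← hTv₀_iter, ← iterate_map_sub]
        gcongr
        exact norm_resolvent_iterate_le_inv_gap_pow (H := (H : F →ₗ[ℝ] F))
          (T := (T : F →ₗ[ℝ] F)) hH hT hτ' hζ hsep horth k
    _ = 2 * ‖φ₀ - v₀‖ / ‖v₀‖ * (|EJ - τ| / ζ) ^ k := by
        have := abs_pos.mpr hEJτ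
        rw [norm_smul, norm_pow, norm_inv, Real.norm_eq_abs, div_pow, inv_pow, inv_pow]
        field_simp
end

section
/- Let H be a symmetric operator on a finite-dimensional real inner product space, τ ∉ spec(H), E_J the unique closest eigenvalue to τ with ζ = dist(τ, spec(H)\{E_J}) > |E_J − τ|. For the inverse iteration iterates ψ_k (as in the convergence theorem, with initial vector having nonzero projection onto the E_J-eigenspace), the Rayleigh quotients satisfy |⟨ψ_k, Hψ_k⟩ − E_J| ≤ C (|E_J − τ|/ζ)^{2k} for some constant C and all sufficiently large k. -/
open scoped RealInnerProductSpace

set_option maxHeartbeats 1000000 in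
/-- Quadratic rate for the energy in shifted inverse iteration: under the hypotheses of the
inverse-iteration convergence theorem, the Rayleigh quotients of the iterates satisfy
`|⟪ψ_k, Hψ_k⟫ − E_J| ≤ C (|E_J − τ|/ζ)^{2k}` for all sufficiently large `k`. -/
theorem inverse_iteration_energy_convergence
    {F : Type*} [NormedAddCommGroup F] [InnerProductSpace ℝ F] [FiniteDimensional ℝ F]
    (H : F →L[ℝ] F) (hH : ∀ x y : F, ⟪H x, y⟫ = ⟪x, H y⟫)
    (τ EJ ζ : ℝ)
    (hτ : ∀ (μ : ℝ) (x : F), x ≠ 0 → H x = μ • x → μ ≠ τ)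
    (hclose : |EJ - τ| < ζ)
    (hsep : ∀ (μ : ℝ) (x : F), x ≠ 0 → H x = μ • x → μ ≠ EJ → ζ ≤ |τ - μ|)
    (T : F →L[ℝ] F) (hT : ∀ x : F, H (T x) - τ • T x = x)
    (φ₀ v₀ : F) (hφ₀ : ‖φ₀‖ = 1) (hv₀eig : H v₀ = EJ • v₀) (hv₀ne : v₀ ≠ 0)
    (horth : ∀ u : F, H u = EJ • u → ⟪φ₀ - v₀, u⟫ = 0)
    (ψ : ℕ → F) (hψ0 : ψ 0 = φ₀)
    (hstep : ∀ k : ℕ, ψ (k + 1) = ‖T (ψ k)‖⁻¹ • T (ψ k)) :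
    ∃ (C : ℝ) (N : ℕ), ∀ k ≥ N,
      |⟪ψ k, H (ψ k)⟫ - EJ| ≤ C * (|EJ - τ| / ζ) ^ (2 * k) := by
  classical
  have hsymm : (H : F →ₗ[ℝ] F).IsSymmetric := fun x y => hH x y
  have hn : Module.finrank ℝ F = Module.finrank ℝ F := rfl
  set e := hsymm.eigenvectorBasis hn with he
  set μ := hsymm.eigenvalues hn with hμ
  have happly : ∀ i, H (e i) = μ i • e i := fun i =>
    hsymm.apply_eigenvectorBasis hn i
  have hene : ∀ i, e i ≠ 0 := fun i => e.toBasis.ne_zero i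
  -- basic positivity
  have hEτ : EJ ≠ τ := hτ EJ v₀ hv₀ne hv₀eig
  have hEτ' : (0:ℝ) < |EJ - τ| := abs_pos.2 (sub_ne_zero.2 hEτ)
  have hζpos : (0:ℝ) < ζ := lt_of_le_of_lt (abs_nonneg _) hclose
  have hμτ : ∀ i, μ i ≠ τ := fun i => hτ (μ i) (e i) (hene i) (happly i)
  -- injectivity of H - τ
  have hinj : ∀ x y : F, H x - τ • x = H y - τ • y → x = y := by
    intro x y hxy
    by_contra hne
    have hz : x - y ≠ 0 := sub_ne_zero.2 hne
    have : H (x - y) = τ • (x - y) := by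
      have := sub_eq_zero.2 hxy
      rw [map_sub] at *
      rw [smul_sub]
      linear_combination (norm := abel) this + hxy - hxy
    exact hτ τ (x - y) hz this rfl
  -- action of T on the eigenbasis
  have hTe : ∀ i, T (e i) = (μ i - τ)⁻¹ • e i := by
    intro i
    have hne : μ i - τ ≠ 0 := sub_ne_zero.2 (hμτ i)
    apply hinj
    rw [hT, map_smul, happly, smul_smul, smul_smul, ← sub_smul]
    rw [show (μ i - τ)⁻¹ * μ i - τ * (μ i - τ)⁻¹ = 1 from by field_simp, one_smul]
  -- T is symmetric
  have hTsymm : ∀ x y : F, ⟪T x, y⟫ = ⟪x, T y⟫ := by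
    intro x y
    have h1 : ⟪T x, y⟫ = ⟪T x, H (T y)⟫ - τ * ⟪T x, T y⟫ := by
      conv_lhs => rw [← hT y]
      rw [inner_sub_right, real_inner_smul_right]
    have h2 : ⟪x, T y⟫ = ⟪H (T x), T y⟫ - τ * ⟪T x, T y⟫ := by
      conv_lhs => rw [← hT x]
      rw [inner_sub_left, real_inner_smul_left]
    rw [h1, h2, hH]
  have hTcoord : ∀ (x : F) (i), ⟪e i, T x⟫ = (μ i - τ)⁻¹ * ⟪e i, x⟫ := by
    intro x i
    rw [← hTsymm, hTe, real_inner_smul_left]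
  -- iterates
  set g : ℕ → F := fun k => (T ^ k) φ₀ with hg
  have hgsucc : ∀ k, g (k + 1) = T (g k) := by
    intro k
    simp only [hg, pow_succ', ContinuousLinearMap.mul_apply]
  have hg0 : g 0 = φ₀ := by simp [hg]
  have hφ₀ne : φ₀ ≠ 0 := by intro h; rw [h, norm_zero] at hφ₀; norm_num at hφ₀
  have hTinj : ∀ x : F, T x = 0 → x = 0 := by
    intro x hx
    have := hT x
    rw [hx, map_zero, smul_zero, sub_zero] at this
    exact this.symm
  have hgne : ∀ k, g k ≠ 0 := by
    intro k; induction k with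
    | zero => rwa [hg0]
    | succ k ih => rw [hgsucc]; intro h; exact ih (hTinj _ h)
  have hψ : ∀ k, ψ k = ‖g k‖⁻¹ • g k := by
    intro k; induction k with
    | zero => rw [hψ0, hg0, hφ₀, inv_one, one_smul]
    | succ k ih =>
      have hk := norm_ne_zero_iff.2 (hgne k)
      have hk1 := norm_ne_zero_iff.2 (hgne (k + 1))
      rw [hstep, ih, map_smul, ← hgsucc, norm_smul, norm_inv, norm_norm, smul_smul]
      congr 1
      field_simp
  -- coordinates
  set a : Fin (Module.finrank ℝ F) → ℝ := fun i => ⟪e i, φ₀⟫ with ha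
  have hcoord : ∀ k i, ⟪e i, g k⟫ = ((μ i - τ)⁻¹) ^ k * a i := by
    intro k; induction k with
    | zero => intro i; rw [hg0, pow_zero, one_mul]
    | succ k ih =>
      intro i
      rw [hgsucc, hTcoord, ih, pow_succ]
      ring
  -- Parseval identities
  have hHcoord : ∀ (x : F) (i), ⟪e i, H x⟫ = μ i * ⟪e i, x⟫ := by
    intro x i
    rw [← hH, happly, real_inner_smul_left]
  have hnormsq : ∀ k, ‖g k‖ ^ 2 = ∑ i, (⟪e i, g k⟫) ^ 2 := by
    intro k
    have := e.sum_inner_mul_inner (g k) (g k)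
    rw [← real_inner_self_eq_norm_sq]
    rw [← this]
    congr 1; ext i
    rw [real_inner_comm (g k) (e i), sq]
  have hHsum : ∀ k, ⟪g k, H (g k)⟫ = ∑ i, μ i * (⟪e i, g k⟫) ^ 2 := by
    intro k
    have := e.sum_inner_mul_inner (g k) (H (g k))
    rw [← this]
    congr 1; ext i
    rw [hHcoord, real_inner_comm (g k) (e i), sq]
    ring
  -- constants
  set p : ℝ := ((EJ - τ)⁻¹) ^ 2 with hp
  have hppos : (0:ℝ) < p := by
    have : EJ - τ ≠ 0 := sub_ne_zero.2 hEτ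
    positivity
  set s : ℝ := (ζ⁻¹) ^ 2 with hs
  set J : Finset (Fin (Module.finrank ℝ F)) := Finset.univ.filter (fun i => μ i = EJ) with hJ
  set A : ℝ := ∑ i ∈ J, (a i) ^ 2 with hA
  set B : ℝ := ∑ i, |μ i - EJ| * (a i) ^ 2 with hB
  -- a i on J equals coordinates of v₀, off J coordinates of v₀ vanish
  have hav : ∀ i, μ i = EJ → a i = ⟪e i, v₀⟫ := by
    intro i hi
    have h0 : ⟪φ₀ - v₀, e i⟫ = 0 := horth (e i) (by rw [happly, hi])
    rw [inner_sub_left] at h0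
    have := sub_eq_zero.1 h0
    calc a i = ⟪φ₀, e i⟫ := real_inner_comm _ _
      _ = ⟪v₀, e i⟫ := this
      _ = ⟪e i, v₀⟫ := real_inner_comm _ _
  have hvoff : ∀ i, μ i ≠ EJ → ⟪e i, v₀⟫ = 0 := by
    intro i hi
    have h1 : μ i * ⟪e i, v₀⟫ = EJ * ⟪e i, v₀⟫ := by
      rw [← hHcoord, hv₀eig, real_inner_smul_right]
    have h2 : (μ i - EJ) * ⟪e i, v₀⟫ = 0 := by linarith [h1]
    rcases mul_eq_zero.1 h2 with h | h
    · exact absurd (sub_eq_zero.1 h) hi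
    · exact h
  have hApos : (0:ℝ) < A := by
    have hAeq : A = ‖v₀‖ ^ 2 := by
      have hnv : ‖v₀‖ ^ 2 = ∑ i, (⟪e i, v₀⟫) ^ 2 := by
        have := e.sum_inner_mul_inner v₀ v₀
        rw [← real_inner_self_eq_norm_sq, ← this]
        congr 1; ext i
        rw [real_inner_comm v₀ (e i), sq]
      rw [hnv, hA]
      rw [Finset.sum_filter]
      apply Finset.sum_congr rfl
      intro i _
      by_cases hi : μ i = EJ
      · rw [if_pos hi, hav i hi]
      · rw [if_neg hi, hvoff i hi]; ring
    rw [hAeq]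
    exact pow_pos (norm_pos_iff.2 hv₀ne) 2
  have hBnonneg : (0:ℝ) ≤ B := Finset.sum_nonneg fun i _ => by positivity
  refine ⟨B / A, 0, fun k _ => ?_⟩
  -- denominator and numerator
  set c : Fin (Module.finrank ℝ F) → ℝ := fun i => ((μ i - τ)⁻¹) ^ k * a i with hc
  have hcsq : ∀ i, (c i) ^ 2 = (((μ i - τ)⁻¹) ^ 2) ^ k * (a i) ^ 2 := by
    intro i
    rw [hc, mul_pow, ← pow_mul, ← pow_mul, Nat.mul_comm]
  set D : ℝ := ∑ i, (c i) ^ 2 with hD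
  set Num : ℝ := ∑ i, (μ i - EJ) * (c i) ^ 2 with hNum
  have hDnorm : D = ‖g k‖ ^ 2 := by
    rw [hD, hnormsq]
    apply Finset.sum_congr rfl
    intro i _
    rw [hcoord, hc]
  have hDge : A * p ^ k ≤ D := by
    have h1 : ∑ i ∈ J, (c i) ^ 2 = A * p ^ k := by
      rw [hA, Finset.sum_mul]
      apply Finset.sum_congr rfl
      intro i hi
      have : μ i = EJ := (Finset.mem_filter.1 hi).2
      rw [hcsq, this, hp]
      ring
    rw [← h1, hD]
    apply Finset.sum_le_sum_of_subset_of_nonneg (Finset.subset_univ J)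
    intro i _ _; positivity
  have hDpos : (0:ℝ) < D := lt_of_lt_of_le (by positivity) hDge
  -- numerator bound
  have hNumle : |Num| ≤ B * s ^ k := by
    rw [hNum, hB, Finset.sum_mul]
    refine le_trans (Finset.abs_sum_le_sum_abs _ _) (Finset.sum_le_sum ?_)
    intro i _
    rw [abs_mul, abs_of_nonneg (sq_nonneg (c i))]
    by_cases hi : μ i = EJ
    · rw [hi, sub_self, abs_zero, zero_mul, zero_mul, zero_mul]
    · have hsep' : ζ ≤ |μ i - τ| := by rw [abs_sub_comm]; exact hsep (μ i) (e i) (hene i) (happly i) hi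
      have hles : ((μ i - τ)⁻¹) ^ 2 ≤ s := by
        rw [hs]
        have h1 : |(μ i - τ)⁻¹| ≤ ζ⁻¹ := by
          rw [abs_inv]
          exact inv_anti₀ hζpos hsep'
        calc ((μ i - τ)⁻¹) ^ 2 = |(μ i - τ)⁻¹| ^ 2 := (sq_abs _).symm
          _ ≤ (ζ⁻¹) ^ 2 := by
              apply pow_le_pow_left₀ (abs_nonneg _) h1
      have hck : (c i) ^ 2 ≤ s ^ k * (a i) ^ 2 := by
        rw [hcsq]
        apply mul_le_mul_of_nonneg_right _ (sq_nonneg _)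
        exact pow_le_pow_left₀ (by positivity) hles k
      calc |μ i - EJ| * (c i) ^ 2 ≤ |μ i - EJ| * (s ^ k * (a i) ^ 2) :=
            mul_le_mul_of_nonneg_left hck (abs_nonneg _)
        _ = |μ i - EJ| * (a i) ^ 2 * s ^ k := by ring
  -- Rayleigh quotient identity
  have hray : ⟪ψ k, H (ψ k)⟫ - EJ = D⁻¹ * Num := by
    have hDne : D ≠ 0 := ne_of_gt hDpos
    have h1 : ⟪ψ k, H (ψ k)⟫ = D⁻¹ * ⟪g k, H (g k)⟫ := by
      rw [hψ, map_smul, real_inner_smul_left, real_inner_smul_right, hDnorm, ← mul_assoc]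
      congr 1
      rw [← mul_inv, ← pow_two]
    have hs1 : ⟪g k, H (g k)⟫ = ∑ i, μ i * (c i) ^ 2 := by
      rw [hHsum]
      apply Finset.sum_congr rfl
      intro i _
      rw [hcoord]
    have hsplit : Num = (∑ i, μ i * (c i) ^ 2) - EJ * D := by
      rw [hNum, hD, Finset.mul_sum, ← Finset.sum_sub_distrib]
      apply Finset.sum_congr rfl
      intro i _
      ring
    rw [h1, hs1, hsplit, mul_sub]
    congr 1
    rw [mul_comm EJ D, ← mul_assoc, inv_mul_cancel₀ hDne, one_mul]
  rw [hray, abs_mul, abs_inv, abs_of_pos hDpos]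
  have hstep1 : D⁻¹ * |Num| ≤ (A * p ^ k)⁻¹ * (B * s ^ k) := by
    apply mul_le_mul _ hNumle (abs_nonneg _) (by positivity)
    exact inv_anti₀ (by positivity) hDge
  refine le_trans hstep1 (le_of_eq ?_)
  have hsp : s / p = (|EJ - τ| / ζ) ^ 2 := by
    have h1 : EJ - τ ≠ 0 := sub_ne_zero.2 hEτ
    have h2 : ζ ≠ 0 := ne_of_gt hζpos
    rw [hs, hp, div_pow, sq_abs]
    field_simp
  have hAne : A ≠ 0 := ne_of_gt hApos
  have hpne : p ≠ 0 := ne_of_gt hppos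
  rw [pow_mul, ← hsp, div_pow]
  field_simp
end
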